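/- Let C ⊆ ℝ^n be a nonempty bounded set and fix μ₀ > 0. Then there exists a constant K ≥ 0 such that for every μ ∈ [μ₀, ∞), every x ∈ C at which V_μ is (Fréchet) differentiable satisfies ‖∇V_μ(x)‖ ≤ (K + μ)‖x − p_μ(x)‖. -/

import Mathlib

/-!
Comparing the value of the subproblem at `p_μ(x)` with its value at a fixed point of `D`, and
bounding the convex `g` below by `-B - 2B‖·‖`, shows that `‖p_μ(x) - x‖` stays bounded for
`x ∈ C` and `μ ≥ μ₀`. Hence the linearizations `F x + ∇F(x)(p_μ(x) - x)` lie in a fixed ball, on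
which `g` is `L`-Lipschitz. As `p_μ(x) ∈ D`, we have
`V_μ(y) ≤ g(F y + ∇F(y)(p_μ(x) - y)) + (μ/2)‖y - p_μ(x)‖²` for all `y`, with equality at `y = x`.
Comparing one-sided derivatives along the ray from `x` in the direction `v = ∇V_μ(x)` gives
`‖v‖² ≤ (L ‖∇²F(x)‖ + μ) ‖x - p_μ(x)‖ ‖v‖`, so `K = L · sup_C ‖∇²F‖` works.
-/

open Metric Filter Topology Set Bornology
open scoped RealInnerProductSpace NNReal

lemma HasDerivAt.le_of_eventually_sub_le_mul {φ k : ℝ → ℝ} {φ' c a : ℝ}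
    (hφ : HasDerivAt φ φ' a) (hk : Tendsto k (𝓝[>] a) (𝓝 c))
    (hle : ∀ᶠ t in 𝓝[>] a, φ t - φ a ≤ (t - a) * k t) : φ' ≤ c := by
  refine le_of_tendsto_of_tendsto
    ((hasDerivAt_iff_tendsto_slope.mp hφ).mono_left (nhdsGT_le_nhdsNE a))
    hk ?_
  filter_upwards [hle, self_mem_nhdsWithin] with t ht (hat : a < t)
  rw [slope_def_field, div_le_iff₀ (sub_pos.mpr hat), mul_comm]
  exact ht

lemma Bornology.IsBounded.image_of_continuous {X Y : Type*} [PseudoMetricSpace X] [ProperSpace X]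
    [PseudoMetricSpace Y] {C : Set X} (hC : IsBounded C) {f : X → Y} (hf : Continuous f) :
    IsBounded (f '' C) :=
  (hC.isCompact_closure.image hf).isBounded.subset (image_mono subset_closure)

lemma Bornology.IsBounded.exists_pos_norm_le_of_continuous {X F : Type*} [PseudoMetricSpace X]
    [ProperSpace X] [SeminormedAddCommGroup F] {C : Set X} (hC : IsBounded C) {f : X → F}
    (hf : Continuous f) : ∃ R > 0, ∀ x ∈ C, ‖f x‖ ≤ R := by
  obtain ⟨R, hR0, hR⟩ := (hC.image_of_continuous hf).exists_pos_norm_le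
  exact ⟨R, hR0, fun x hx => hR _ (mem_image_of_mem f hx)⟩

lemma exists_le_of_half_mul_sq_le {μ₀ : ℝ} (hμ₀ : 0 < μ₀) (A β c : ℝ) :
    ∃ ρ, ∀ μ r : ℝ, μ₀ ≤ μ → 0 ≤ r → μ / 2 * r ^ 2 ≤ A + β * r + μ / 2 * c ^ 2 → r ≤ ρ := by
  set P := 2 * |A| / μ₀
  set Q := 2 * |β| / μ₀
  refine ⟨|c| + P + Q + 1, fun μ r hμ hr h => ?_⟩
  by_contra! hρ
  have hP : 0 ≤ P := by positivity
  have hQ : 0 ≤ Q := by positivity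
  have hcr : c ^ 2 ≤ r * |c| := by
    rw [← sq_abs, sq]; exact mul_le_mul_of_nonneg_right (by linarith) (abs_nonneg c)
  have hquad : r ^ 2 - c ^ 2 ≤ P + Q * r := by
    refine le_of_mul_le_mul_left ?_ hμ₀
    calc μ₀ * (r ^ 2 - c ^ 2) ≤ μ * (r ^ 2 - c ^ 2) :=
          mul_le_mul_of_nonneg_right hμ (by nlinarith [abs_nonneg c])
      _ ≤ 2 * (A + β * r) := by linarith
      _ ≤ 2 * (|A| + |β| * r) := by
          gcongr; exact le_abs_self A; exact le_abs_self β
      _ = μ₀ * (P + Q * r) := by simp only [P, Q]; field_simp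
  have hr1 : 1 ≤ r := by linarith [abs_nonneg c]
  have hrρ : r * (|c| + P + Q + 1) < r * r := mul_lt_mul_of_pos_left hρ (by linarith)
  nlinarith [mul_le_mul_of_nonneg_right hr1 hP]

section

variable {E F : Type*} [NormedAddCommGroup E] [NormedSpace ℝ E]
  [NormedAddCommGroup F] [NormedSpace ℝ F]

lemma norm_add_apply_le {w : F} {A : E →L[ℝ] F} {a b : ℝ} (ha : ‖w‖ ≤ a) (hb : ‖A‖ ≤ b) (v : E) :
    ‖w + A v‖ ≤ a + b * ‖v‖ :=
  (norm_add_le _ _).trans (add_le_add ha (A.le_of_opNorm_le hb v))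

lemma ConvexOn.neg_sub_mul_norm_le {g : F → ℝ} (hg : ConvexOn ℝ univ g) {B : ℝ}
    (hB : ∀ w ∈ closedBall (0 : F) 1, |g w| ≤ B) (w : F) : -B - 2 * B * ‖w‖ ≤ g w := by
  have hg0 := abs_le.mp (hB 0 (mem_closedBall_self zero_le_one))
  rcases le_or_gt ‖w‖ 1 with hw | hw
  · have := (abs_le.mp (hB w (mem_closedBall_zero_iff.mpr hw))).1
    nlinarith [norm_nonneg w]
  set t := ‖w‖
  have ht : 0 < t := zero_lt_one.trans hw
  have hu : |g (t⁻¹ • w)| ≤ B := hB _ <| by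
    rw [mem_closedBall_zero_iff, norm_smul, norm_inv, norm_norm, inv_mul_cancel₀ ht.ne']
  have hcvx : g (t⁻¹ • w) ≤ t⁻¹ * g w + (1 - t⁻¹) * g 0 := by
    simpa using hg.2 (mem_univ w) (mem_univ 0) (inv_nonneg.mpr ht.le)
      (sub_nonneg.mpr (inv_le_one_of_one_le₀ hw.le)) (add_sub_cancel _ 1)
  have hmul : t * g (t⁻¹ • w) ≤ g w + (t - 1) * g 0 := by
    have := mul_le_mul_of_nonneg_left hcvx ht.le
    have e : t * (t⁻¹ * g w + (1 - t⁻¹) * g 0) = g w + (t - 1) * g 0 := by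
      field_simp
    rwa [e] at this
  nlinarith [(abs_le.mp hu).1]

/-- The paper's `h(x, y) + (μ / 2) ‖y - x‖²`. -/
noncomputable def linearizedProxObjective (Φ : E → F) (g : F → ℝ) (μ : ℝ) (x y : E) : ℝ :=
  g (Φ x + fderiv ℝ Φ x (y - x)) + μ / 2 * ‖y - x‖ ^ 2

lemma exists_forall_norm_sub_le_of_linearizedProxObjective_le [ProperSpace F] {Φ : E → F}
    {g : F → ℝ} (hg : ConvexOn ℝ univ g) (hgc : Continuous g) {C : Set E} {d : E}
    {a b c μ₀ : ℝ} (ha : ∀ x ∈ C, ‖Φ x‖ ≤ a) (hb : ∀ x ∈ C, ‖fderiv ℝ Φ x‖ ≤ b)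
    (hc : ∀ x ∈ C, ‖d - x‖ ≤ c) (hμ₀ : 0 < μ₀) :
    ∃ ρ, ∀ μ, μ₀ ≤ μ → ∀ x ∈ C, ∀ y,
      linearizedProxObjective Φ g μ x y ≤ linearizedProxObjective Φ g μ x d → ‖y - x‖ ≤ ρ := by
  obtain ⟨B, hB0, hB⟩ :=
    (isBounded_closedBall (x := (0 : F)) (r := 1)).exists_pos_norm_le_of_continuous hgc
  obtain ⟨G, -, hG⟩ :=
    (isBounded_closedBall (x := (0 : F)) (r := a + b * c)).exists_pos_norm_le_of_continuous hgc
  obtain ⟨ρ, hρ⟩ := exists_le_of_half_mul_sq_le hμ₀ (G + B + 2 * B * a) (2 * B * b) c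
  refine ⟨ρ, fun μ hμ x hx y hy => hρ μ _ hμ (norm_nonneg _) ?_⟩
  have hb0 : 0 ≤ b := (norm_nonneg _).trans (hb x hx)
  have hgd : g (Φ x + fderiv ℝ Φ x (d - x)) ≤ G := by
    refine (le_abs_self _).trans (hG _ (mem_closedBall_zero_iff.mpr ?_))
    exact (norm_add_apply_le (ha x hx) (hb x hx) _).trans (by gcongr; exact hc x hx)
  have hgy : -B - 2 * B * (a + b * ‖y - x‖) ≤ g (Φ x + fderiv ℝ Φ x (y - x)) := by
    refine le_trans ?_ (hg.neg_sub_mul_norm_le hB _)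
    gcongr
    exact norm_add_apply_le (ha x hx) (hb x hx) _
  have hdc : ‖d - x‖ ^ 2 ≤ c ^ 2 := pow_le_pow_left₀ (norm_nonneg _) (hc x hx) 2
  have hμ0 : 0 ≤ μ := hμ₀.le.trans hμ
  unfold linearizedProxObjective at hy
  nlinarith [mul_le_mul_of_nonneg_left hdc hμ0]

lemma hasFDerivAt_add_fderiv_apply_sub {Φ : E → F} {x : E} (hΦ : DifferentiableAt ℝ Φ x)
    (hΦ' : DifferentiableAt ℝ (fderiv ℝ Φ) x) (q : E) :
    HasFDerivAt (fun y => Φ y + fderiv ℝ Φ y (q - y))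
      ((fderiv ℝ (fderiv ℝ Φ) x).flip (q - x)) x := by
  refine (hΦ.hasFDerivAt.add (hΦ'.hasFDerivAt.clm_apply
    ((hasFDerivAt_const q x).sub (hasFDerivAt_id x)))).congr_fderiv ?_
  ext u
  simp [map_sub]

lemma HasFDerivAt.apply_le_of_le_lipschitzOnWith_comp_add {f h : E → ℝ} {f' h' : E →L[ℝ] ℝ}
    {G : E → F} {G' : E →L[ℝ] F} {g : F → ℝ} {s : Set F} {L : ℝ≥0} {x : E}
    (hf : HasFDerivAt f f' x) (hh : HasFDerivAt h h' x) (hG : HasFDerivAt G G' x)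
    (hs : s ∈ 𝓝 (G x)) (hg : LipschitzOnWith L g s)
    (hle : ∀ᶠ y in 𝓝 x, f y ≤ g (G y) + h y) (heq : f x = g (G x) + h x) (v : E) :
    f' v ≤ L * ‖G' v‖ + h' v := by
  set γ : ℝ → E := fun t => x + t • v
  have hγ : HasDerivAt γ v 0 := by
    simpa [γ] using ((hasDerivAt_id (0 : ℝ)).smul_const v).const_add x
  have hγ0 : x = γ 0 := by simp [γ]
  have hγx : Tendsto γ (𝓝[>] 0) (𝓝 x) :=
    hγ0 ▸ hγ.continuousAt.tendsto.mono_left nhdsWithin_le_nhds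
  have hGγ : HasDerivAt (G ∘ γ) (G' v) 0 := hG.comp_hasDerivAt_of_eq 0 hγ hγ0
  have hφ : HasDerivAt (fun t => f (γ t) - h (γ t)) (f' v - h' v) 0 :=
    (hf.comp_hasDerivAt_of_eq 0 hγ hγ0).sub (hh.comp_hasDerivAt_of_eq 0 hγ hγ0)
  suffices f' v - h' v ≤ L * ‖G' v‖ by linarith
  have hslope : Tendsto (slope (G ∘ γ) 0) (𝓝[>] 0) (𝓝 (G' v)) :=
    (hasDerivAt_iff_tendsto_slope.mp hGγ).mono_left (nhdsGT_le_nhdsNE 0)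
  refine hφ.le_of_eventually_sub_le_mul (hslope.norm.const_mul (L : ℝ)) ?_
  filter_upwards [hγx.eventually hle, hγx.eventually (hG.continuousAt.preimage_mem_nhds hs),
    self_mem_nhdsWithin] with t hft hGt (ht : 0 < t)
  have hlip : g (G (γ t)) - g (G x) ≤ L * ‖G (γ t) - G x‖ := by
    rw [← dist_eq_norm]
    exact (le_abs_self _).trans (hg.dist_le_mul _ hGt _ (mem_of_mem_nhds hs))
  simp only [slope_def_module, Function.comp_apply, ← hγ0, sub_zero]
  rw [norm_smul, norm_inv, Real.norm_of_nonneg ht.le, mul_left_comm, mul_inv_cancel_left₀ ht.ne']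
  linarith

end

lemma norm_gradient_le_of_le_lipschitzOnWith_comp_add_sq {E F : Type*} [NormedAddCommGroup E]
    [InnerProductSpace ℝ E] [CompleteSpace E] [NormedAddCommGroup F] [NormedSpace ℝ F]
    {f : E → ℝ} {G : E → F} {G' : E →L[ℝ] F} {g : F → ℝ} {s : Set F} {L : ℝ≥0} {x q : E} {μ : ℝ}
    (hf : DifferentiableAt ℝ f x) (hG : HasFDerivAt G G' x) (hs : s ∈ 𝓝 (G x))
    (hg : LipschitzOnWith L g s) (hle : ∀ᶠ y in 𝓝 x, f y ≤ g (G y) + μ / 2 * ‖y - q‖ ^ 2)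
    (heq : f x = g (G x) + μ / 2 * ‖x - q‖ ^ 2) (hμ : 0 ≤ μ) :
    ‖gradient f x‖ ≤ L * ‖G'‖ + μ * ‖x - q‖ := by
  set v := gradient f x
  have hh := (((hasFDerivAt_id x).sub_const q).norm_sq).const_mul (μ / 2)
  have hfv : fderiv ℝ f x v = ‖v‖ ^ 2 := by
    rw [hf.hasGradientAt.hasFDerivAt.fderiv, InnerProductSpace.toDual_apply_apply,
      real_inner_self_eq_norm_sq]
  have hv : ‖v‖ ^ 2 ≤ (L * ‖G'‖ + μ * ‖x - q‖) * ‖v‖ := by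
    calc ‖v‖ ^ 2 ≤ L * ‖G' v‖ + μ * ⟪x - q, v⟫ := by
          have := hf.hasFDerivAt.apply_le_of_le_lipschitzOnWith_comp_add hh hG hs hg hle heq v
          simp [hfv, inner_sub_left] at this ⊢
          linarith
      _ ≤ L * (‖G'‖ * ‖v‖) + μ * (‖x - q‖ * ‖v‖) := by
          gcongr
          · exact G'.le_opNorm v
          · exact real_inner_le_norm _ _
      _ = (L * ‖G'‖ + μ * ‖x - q‖) * ‖v‖ := by ring
  rcases (norm_nonneg v).eq_or_lt with hv0 | hv0
  · rw [← hv0]; positivity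
  · exact le_of_mul_le_mul_right (by rwa [sq] at hv) hv0

theorem stmt_15_general {n m : ℕ}
    (F : EuclideanSpace ℝ (Fin n) → EuclideanSpace ℝ (Fin m))
    (g : EuclideanSpace ℝ (Fin m) → ℝ)
    (D : Set (EuclideanSpace ℝ (Fin n)))
    (hF : ContDiff ℝ 2 F)
    (hg : ConvexOn ℝ Set.univ g) (hgc : Continuous g)
    (hDne : D.Nonempty)
    (p : ℝ → EuclideanSpace ℝ (Fin n) → EuclideanSpace ℝ (Fin n))
    (V : ℝ → EuclideanSpace ℝ (Fin n) → ℝ)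
    (hp : ∀ μ, 0 < μ → ∀ x, p μ x ∈ D ∧ ∀ z ∈ D,
      g (F x + fderiv ℝ F x (p μ x - x)) + μ / 2 * ‖p μ x - x‖ ^ 2 ≤
      g (F x + fderiv ℝ F x (z - x)) + μ / 2 * ‖z - x‖ ^ 2)
    (hV : ∀ μ, 0 < μ → ∀ x,
      V μ x = g (F x + fderiv ℝ F x (p μ x - x)) + μ / 2 * ‖p μ x - x‖ ^ 2)
    (C : Set (EuclideanSpace ℝ (Fin n)))
    (hCbd : Bornology.IsBounded C) (μ₀ : ℝ) (hμ₀ : 0 < μ₀) :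
    ∃ K ≥ (0 : ℝ), ∀ μ, μ₀ ≤ μ → ∀ x ∈ C, DifferentiableAt ℝ (V μ) x →
      ‖gradient (V μ) x‖ ≤ (K + μ) * ‖x - p μ x‖ := by
  obtain ⟨d, hd⟩ := hDne
  have hF' : ContDiff ℝ 1 (fderiv ℝ F) := hF.fderiv_right le_rfl
  obtain ⟨a, -, ha⟩ := hCbd.exists_pos_norm_le_of_continuous hF.continuous
  obtain ⟨b, hb0, hb⟩ := hCbd.exists_pos_norm_le_of_continuous hF'.continuous
  obtain ⟨M, hM0, hM⟩ := hCbd.exists_pos_norm_le_of_continuous (hF'.continuous_fderiv one_ne_zero)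
  obtain ⟨c, -, hc⟩ := hCbd.exists_pos_norm_le_of_continuous (continuous_sub_left d)
  obtain ⟨ρ, hρ⟩ := exists_forall_norm_sub_le_of_linearizedProxObjective_le hg hgc ha hb hc hμ₀
  obtain ⟨L, hL⟩ := (hg.subset (subset_univ _) (convex_ball 0 (a + b * ρ + 1 + 1)))
    |>.exists_lipschitzOnWith_of_isBounded (lt_add_one _) (isBounded_ball.image_of_continuous hgc)
  refine ⟨L * M, by positivity, fun μ hμ x hx hVx => ?_⟩
  have hμ0 : 0 < μ := hμ₀.trans_le hμ
  set q := p μ x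
  have hqx : ‖q - x‖ ≤ ρ := hρ μ hμ x hx q ((hp μ hμ0 x).2 d hd)
  have hGx : F x + fderiv ℝ F x (q - x) ∈ ball 0 (a + b * ρ + 1) := by
    rw [mem_ball_zero_iff]
    have := norm_add_apply_le (ha x hx) (hb x hx) (q - x)
    nlinarith
  have hupper : ∀ y, V μ y ≤ g (F y + fderiv ℝ F y (q - y)) + μ / 2 * ‖y - q‖ ^ 2 := fun y => by
    rw [hV μ hμ0 y, norm_sub_rev y q]
    exact (hp μ hμ0 y).2 q (hp μ hμ0 x).1
  have hG := hasFDerivAt_add_fderiv_apply_sub (hF.differentiable two_ne_zero x)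
    (hF'.differentiable one_ne_zero x) q
  calc ‖gradient (V μ) x‖ ≤ L * ‖(fderiv ℝ (fderiv ℝ F) x).flip (q - x)‖ + μ * ‖x - q‖ :=
        norm_gradient_le_of_le_lipschitzOnWith_comp_add_sq hVx hG (isOpen_ball.mem_nhds hGx) hL
          (Eventually.of_forall hupper) (by rw [hV μ hμ0 x, norm_sub_rev]) hμ0.le
    _ ≤ L * (M * ‖x - q‖) + μ * ‖x - q‖ := by
        rw [norm_sub_rev x q]
        gcongr
        exact ContinuousLinearMap.le_of_opNorm_le _
          ((ContinuousLinearMap.opNorm_flip _).trans_le (hM x hx)) _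
    _ = (L * M + μ) * ‖x - q‖ := by ring

/-- For any nonempty bounded `C ⊆ ℝ^n` and any `μ₀ > 0`, there is `K ≥ 0` such
that for every `μ ≥ μ₀` and every `x ∈ C` at which `V_μ` is differentiable,
`‖∇V_μ(x)‖ ≤ (K + μ)‖x - p_μ(x)‖`. -/
theorem stmt_15 {n m : ℕ}
    (F : EuclideanSpace ℝ (Fin n) → EuclideanSpace ℝ (Fin m))
    (g : EuclideanSpace ℝ (Fin m) → ℝ)
    (D : Set (EuclideanSpace ℝ (Fin n)))
    (hF : ContDiff ℝ 2 F)
    (hg : ConvexOn ℝ Set.univ g) (hgc : Continuous g)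
    (hDne : D.Nonempty) (hDcl : IsClosed D) (hDcv : Convex ℝ D)
    (p : ℝ → EuclideanSpace ℝ (Fin n) → EuclideanSpace ℝ (Fin n))
    (V : ℝ → EuclideanSpace ℝ (Fin n) → ℝ)
    (hp : ∀ μ, 0 < μ → ∀ x, p μ x ∈ D ∧ ∀ z ∈ D,
      g (F x + fderiv ℝ F x (p μ x - x)) + μ / 2 * ‖p μ x - x‖ ^ 2 ≤
      g (F x + fderiv ℝ F x (z - x)) + μ / 2 * ‖z - x‖ ^ 2)
    (hV : ∀ μ, 0 < μ → ∀ x,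
      V μ x = g (F x + fderiv ℝ F x (p μ x - x)) + μ / 2 * ‖p μ x - x‖ ^ 2)
    (C : Set (EuclideanSpace ℝ (Fin n))) (hCne : C.Nonempty)
    (hCbd : Bornology.IsBounded C) (μ₀ : ℝ) (hμ₀ : 0 < μ₀) :
    ∃ K ≥ (0 : ℝ), ∀ μ, μ₀ ≤ μ → ∀ x ∈ C, DifferentiableAt ℝ (V μ) x →
      ‖gradient (V μ) x‖ ≤ (K + μ) * ‖x - p μ x‖ :=
  stmt_15_general F g D hF hg hgc hDne p V hp hV C hCbd μ₀ hμ₀
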